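/- (Equality in Newton's inequality for the radial solution, Lemma 2.6(i)) Let N ≥ 2, 1 < p < 2, z ∈ ℝ^N, r ∈ ℝ, and define w_r : ℝ^N → ℝ by w_r(x) := −((p−1)/(p N^{1/(p−1)})) ( |x−z|^{p/(p−1)} − r ). Then for every x ≠ z, with e := (x−z)/|x−z|, the Hessian satisfies D²w_r(x) = −N^{−1/(p−1)} |x−z|^{(2−p)/(p−1)} ( ((2−p)/(p−1)) e⊗e + I ), and consequently |∇w_r(x)|^{p−2} ( I + (p−2) e⊗e ) D²w_r(x) = −(1/N) I; in particular this matrix A := |∇w_r(x)|^{p−2} ( I + (p−2) e⊗e ) D²w_r(x) satisfies ‖A‖² = (Tr A)²/N, i.e. equality holds in Newton's inequality. -/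

import Mathlib

/-!
`w_r = c (|x - z|^q - r)` with `q = p/(p-1)`, so `∇w_r(x) = c q |x-z|^(q-2) (x - z)` and
`D²w_r(x) = c q |x-z|^(q-2) ((q-2) e⊗e + I)`. Since `e` is a unit vector,
`(I + a e⊗e)(I + b e⊗e) = I + (a + b + ab) e⊗e`, and for `a = p - 2`, `b = q - 2` one has
`(1 + a)(1 + b) = (p-1)/(p-1) = 1`, i.e. `a + b + ab = 0`. The remaining scalar
`|∇w_r|^(p-2) c q |x-z|^(q-2)` is `-1/N`: the powers of `|x-z|` cancel and those of `N` add up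
to `N^(-1)`. So `A` is a multiple of the identity, for which Newton's inequality is an equality.
-/

open Matrix Real

/-- The Hessian matrix of `w` at `x`: entry `(i,j)` is `∂²w/∂xᵢ∂xⱼ`. -/
noncomputable def hess {N : ℕ} (w : EuclideanSpace ℝ (Fin N) → ℝ) (x : EuclideanSpace ℝ (Fin N)) :
    Matrix (Fin N) (Fin N) ℝ :=
  fun i j => gradient (fun y => gradient w y j) x i

/-- The square of the Frobenius norm of a matrix. -/
noncomputable def frobSq {n : ℕ} (A : Matrix (Fin n) (Fin n) ℝ) : ℝ :=
  ∑ i, ∑ j, (A i j)^2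

section Radial

variable {F : Type*} [NormedAddCommGroup F] [InnerProductSpace ℝ F]

theorem hasFDerivAt_norm_sub_rpow {z x : F} (hx : x ≠ z) (q : ℝ) :
    HasFDerivAt (fun y => ‖y - z‖ ^ q) ((q * ‖x - z‖ ^ (q - 2)) • innerSL ℝ (x - z)) x := by
  have hsq : ∀ y : F, ∀ s : ℝ, (‖y - z‖ ^ 2) ^ s = ‖y - z‖ ^ (2 * s) := fun y s => by
    rw [← rpow_natCast_mul (norm_nonneg _)]; norm_num
  have h := ((hasFDerivAt_id x).sub_const z).norm_sq.rpow_const (p := q / 2)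
    (Or.inl (by simpa using sub_ne_zero.2 hx))
  simp only [hsq, id, show 2 * (q / 2) = q by ring, show 2 * (q / 2 - 1) = q - 2 by ring] at h
  exact h.congr_fderiv <| by ext u; simp; ring

variable [CompleteSpace F]

theorem HasGradientAt.const_mul {f : F → ℝ} {f' x : F} (h : HasGradientAt f f' x) (c : ℝ) :
    HasGradientAt (fun y => c * f y) (c • f') x :=
  (HasFDerivAt.const_mul h c).congr_fderiv <| by ext; simp

theorem hasGradientAt_radial_rpow {z x : F} (hx : x ≠ z) (c q r : ℝ) :
    HasGradientAt (fun y => c * (‖y - z‖ ^ q - r)) ((c * q * ‖x - z‖ ^ (q - 2)) • (x - z)) x :=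
  (((hasFDerivAt_norm_sub_rpow hx q).sub_const r).const_mul c).congr_fderiv <| by
    ext u; simp; ring

theorem hasGradientAt_norm_sub_rpow_mul_inner {z x : F} (hx : x ≠ z) (s : ℝ) (v : F) :
    HasGradientAt (fun y => ‖y - z‖ ^ s * inner ℝ v (y - z))
      (‖x - z‖ ^ s • v + (s * ‖x - z‖ ^ (s - 2) * inner ℝ v (x - z)) • (x - z)) x := by
  have hv : HasFDerivAt (fun y => inner ℝ v (y - z)) (innerSL ℝ v) x := by
    simpa [inner_sub_right] using (innerSL ℝ v).hasFDerivAt.sub_const (inner ℝ v z)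
  exact ((hasFDerivAt_norm_sub_rpow hx s).mul hv).congr_fderiv <| by
    ext u; simp; ring

end Radial

theorem one_add_smul_vecMulVec_mul_smul_vecMulVec_add_one {n R : Type*} [Fintype n] [DecidableEq n]
    [CommRing R] {e : n → R} (he : e ⬝ᵥ e = 1) (a b : R) :
    (1 + a • vecMulVec e e) * (b • vecMulVec e e + 1) = (a + b + a * b) • vecMulVec e e + 1 := by
  simp only [add_mul, mul_add, one_mul, mul_one, smul_mul_smul_comm, vecMulVec_mul_vecMulVec, he,
    one_smul]
  module

theorem frobSq_smul_one {n : ℕ} (a : ℝ) :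
    frobSq (a • (1 : Matrix (Fin n) (Fin n) ℝ)) =
      (a • (1 : Matrix (Fin n) (Fin n) ℝ)).trace ^ 2 / n := by
  have hfrob : frobSq (a • (1 : Matrix (Fin n) (Fin n) ℝ)) = n * a ^ 2 := by
    simp [frobSq, one_apply, ite_pow]
  rw [hfrob, trace_smul, trace_one, Fintype.card_fin, smul_eq_mul]
  rcases eq_or_ne (n : ℝ) 0 with hn | hn
  · simp [hn]
  · field_simp

section Euclidean

variable {N : ℕ}

noncomputable def unitDir (x z : EuclideanSpace ℝ (Fin N)) : Fin N → ℝ :=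
  fun i => (x - z) i / ‖x - z‖

theorem unitDir_dotProduct_self {x z : EuclideanSpace ℝ (Fin N)} (hx : x ≠ z) :
    unitDir x z ⬝ᵥ unitDir x z = 1 := by
  have hd : ‖x - z‖ ≠ 0 := norm_ne_zero_iff.2 (sub_ne_zero.2 hx)
  have h := EuclideanSpace.real_norm_sq_eq (x - z)
  simp only [dotProduct, unitDir, div_mul_div_comm, ← Finset.sum_div]
  simp only [← sq, ← h]
  field_simp

theorem hess_radial_rpow {z x : EuclideanSpace ℝ (Fin N)} (hx : x ≠ z) (c q r : ℝ) :
    hess (fun y => c * (‖y - z‖ ^ q - r)) x =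
      (c * q * ‖x - z‖ ^ (q - 2)) • ((q - 2) • vecMulVec (unitDir x z) (unitDir x z) + 1) := by
  ext i j
  have hpartial : (fun y => gradient (fun y => c * (‖y - z‖ ^ q - r)) y j) =ᶠ[nhds x]
      fun y => c * q * (‖y - z‖ ^ (q - 2) * inner ℝ (EuclideanSpace.single j 1) (y - z)) := by
    filter_upwards [isOpen_ne.mem_nhds hx] with y hy
    rw [(hasGradientAt_radial_rpow hy c q r).gradient]
    simp only [PiLp.smul_apply, PiLp.sub_apply, smul_eq_mul, EuclideanSpace.inner_single_left,
      ringHom_apply, one_mul]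
    ring
  have hd : 0 < ‖x - z‖ := norm_pos_iff.2 (sub_ne_zero.2 hx)
  have hpow : ‖x - z‖ ^ (q - 2 - 2) = ‖x - z‖ ^ (q - 2) / ‖x - z‖ ^ 2 := by
    rw [rpow_sub hd, rpow_two]
  rw [hess, hpartial.gradient_eq,
    ((hasGradientAt_norm_sub_rpow_mul_inner hx (q - 2) _).const_mul (c * q)).gradient]
  simp only [PiLp.add_apply, PiLp.smul_apply, PiLp.sub_apply, PiLp.single_apply, smul_eq_mul,
    EuclideanSpace.inner_single_left, Matrix.add_apply, Matrix.smul_apply, one_apply, map_one,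
    vecMulVec_apply, unitDir, hpow]
  split_ifs <;> field_simp <;> ring

end Euclidean

section RadialSolution

variable {N : ℕ} {p : ℝ} {z x : EuclideanSpace ℝ (Fin N)} (r : ℝ)

noncomputable def radialSolution (N : ℕ) (p : ℝ) (z : EuclideanSpace ℝ (Fin N)) (r : ℝ) :
    EuclideanSpace ℝ (Fin N) → ℝ :=
  fun y => -((p - 1) / (p * (N : ℝ) ^ ((1 : ℝ) / (p - 1)))) * (‖y - z‖ ^ (p / (p - 1)) - r)

theorem div_sub_one_sub_two (hp₁ : p ≠ 1) : p / (p - 1) - 2 = (2 - p) / (p - 1) := by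
  have hp : p - 1 ≠ 0 := sub_ne_zero.2 hp₁
  field_simp
  ring

theorem radialSolution_coeff_mul (hp₀ : p ≠ 0) (hp₁ : p ≠ 1) :
    -((p - 1) / (p * (N : ℝ) ^ ((1 : ℝ) / (p - 1)))) * (p / (p - 1)) =
      -(N : ℝ) ^ (-((1 : ℝ) / (p - 1))) := by
  have hp : p - 1 ≠ 0 := sub_ne_zero.2 hp₁
  rw [rpow_neg (Nat.cast_nonneg N)]
  field_simp

theorem gradient_radialSolution (hp₀ : p ≠ 0) (hp₁ : p ≠ 1) (hx : x ≠ z) :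
    gradient (radialSolution N p z r) x =
      (-((N : ℝ) ^ (-((1 : ℝ) / (p - 1))) * ‖x - z‖ ^ ((2 - p) / (p - 1)))) • (x - z) := by
  unfold radialSolution
  rw [(hasGradientAt_radial_rpow hx _ _ r).gradient, radialSolution_coeff_mul hp₀ hp₁,
    div_sub_one_sub_two hp₁, neg_mul]

theorem hess_radialSolution (hp₀ : p ≠ 0) (hp₁ : p ≠ 1) (hx : x ≠ z) :
    hess (radialSolution N p z r) x =
      (-((N : ℝ) ^ (-((1 : ℝ) / (p - 1))) * ‖x - z‖ ^ ((2 - p) / (p - 1)))) •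
        (((2 - p) / (p - 1)) • vecMulVec (unitDir x z) (unitDir x z) + 1) := by
  unfold radialSolution
  rw [hess_radial_rpow hx, radialSolution_coeff_mul hp₀ hp₁, div_sub_one_sub_two hp₁, neg_mul]

theorem norm_gradient_radialSolution_rpow_mul (hp₀ : p ≠ 0) (hp₁ : p ≠ 1) (hx : x ≠ z) :
    ‖gradient (radialSolution N p z r) x‖ ^ (p - 2) *
      ((N : ℝ) ^ (-((1 : ℝ) / (p - 1))) * ‖x - z‖ ^ ((2 - p) / (p - 1))) = 1 / N := by
  have hp : p - 1 ≠ 0 := sub_ne_zero.2 hp₁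
  have hd : 0 < ‖x - z‖ := norm_pos_iff.2 (sub_ne_zero.2 hx)
  set K := (N : ℝ) ^ (-((1 : ℝ) / (p - 1))) with hK_def
  set m := (2 - p) / (p - 1) with hm
  have hK : 0 ≤ K := rpow_nonneg (Nat.cast_nonneg N) _
  have hnorm : ‖gradient (radialSolution N p z r) x‖ = K * ‖x - z‖ ^ (m + 1) := by
    rw [gradient_radialSolution r hp₀ hp₁ hx, norm_smul, norm_neg, norm_mul, norm_of_nonneg hK,
      norm_of_nonneg (rpow_nonneg hd.le _), rpow_add_one hd.ne', mul_assoc]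
  have hKpow : K ^ (p - 2) * K = (N : ℝ)⁻¹ := by
    rw [← rpow_add_one' hK (by contrapose! hp₁; linarith), hK_def,
      ← rpow_mul (Nat.cast_nonneg N),
      show -(1 / (p - 1)) * (p - 2 + 1) = -1 by field_simp; ring, rpow_neg_one]
  have hdpow : (‖x - z‖ ^ (m + 1)) ^ (p - 2) * ‖x - z‖ ^ m = 1 := by
    rw [← rpow_mul hd.le, ← rpow_add hd,
      show (m + 1) * (p - 2) + m = 0 by rw [hm]; field_simp; ring, rpow_zero]
  calc ‖gradient (radialSolution N p z r) x‖ ^ (p - 2) * (K * ‖x - z‖ ^ m)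
      = (K ^ (p - 2) * K) * ((‖x - z‖ ^ (m + 1)) ^ (p - 2) * ‖x - z‖ ^ m) := by
        rw [hnorm, mul_rpow hK (rpow_nonneg hd.le _)]; ring
    _ = 1 / N := by rw [hKpow, hdpow, mul_one, one_div]

end RadialSolution

theorem radial_solution_newton_equality_general (N : ℕ) (p : ℝ) (hp1 : 1 < p)
    (z : EuclideanSpace ℝ (Fin N)) (r : ℝ)
    (w : EuclideanSpace ℝ (Fin N) → ℝ)
    (hw : ∀ x, w x = -((p - 1) / (p * (N : ℝ) ^ ((1 : ℝ) / (p - 1)))) *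
        (‖x - z‖ ^ (p / (p - 1)) - r))
    (x : EuclideanSpace ℝ (Fin N)) (hx : x ≠ z) :
    let e : Fin N → ℝ := fun i => (x - z) i / ‖x - z‖
    let A : Matrix (Fin N) (Fin N) ℝ :=
      ‖gradient w x‖ ^ (p - 2) •
        (((1 : Matrix (Fin N) (Fin N) ℝ) + (p - 2) • Matrix.vecMulVec e e) * hess w x)
    hess w x = (-((N : ℝ) ^ (-((1 : ℝ) / (p - 1))) * ‖x - z‖ ^ ((2 - p) / (p - 1)))) •
        (((2 - p) / (p - 1)) • Matrix.vecMulVec e e + (1 : Matrix (Fin N) (Fin N) ℝ)) ∧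
      A = (-(1 / (N : ℝ))) • (1 : Matrix (Fin N) (Fin N) ℝ) ∧
      frobSq A = (A.trace) ^ 2 / (N : ℝ) := by
  intro e A
  have hp₀ : p ≠ 0 := (zero_lt_one.trans hp1).ne'
  have hp₁ : p ≠ 1 := hp1.ne'
  obtain rfl : w = radialSolution N p z r := funext hw
  have hhess := hess_radialSolution r hp₀ hp₁ hx
  have hA : A = (-(1 / (N : ℝ))) • (1 : Matrix (Fin N) (Fin N) ℝ) := by
    have hcancel : (p - 2) + (2 - p) / (p - 1) + (p - 2) * ((2 - p) / (p - 1)) = 0 := by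
      have hp : p - 1 ≠ 0 := sub_ne_zero.2 hp₁
      field_simp; ring
    simp only [A]
    rw [hhess, mul_smul_comm, smul_smul, mul_neg,
      norm_gradient_radialSolution_rpow_mul r hp₀ hp₁ hx, show e = unitDir x z from rfl,
      one_add_smul_vecMulVec_mul_smul_vecMulVec_add_one (unitDir_dotProduct_self hx), hcancel,
      zero_smul, zero_add]
  exact ⟨hhess, hA, hA ▸ frobSq_smul_one _⟩

/-- **Equality in Newton's inequality for the radial solution** (Lemma 2.6(i) of the paper).
For `w_r(x) = -((p-1)/(p N^{1/(p-1)}))(|x-z|^{p/(p-1)} - r)`, `1 < p < 2`, and `x ≠ z`, with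
`e = (x-z)/|x-z|`: `D²w_r(x) = -N^{-1/(p-1)} |x-z|^{(2-p)/(p-1)} (((2-p)/(p-1)) e⊗e + I)`,
`|∇w_r(x)|^{p-2} (I + (p-2) e⊗e) D²w_r(x) = -(1/N) I`, and this matrix `A` satisfies
`‖A‖² = (Tr A)²/N`, i.e. equality holds in Newton's inequality. -/
theorem radial_solution_newton_equality (N : ℕ) (hN : 2 ≤ N) (p : ℝ) (hp1 : 1 < p) (hp2 : p < 2)
    (z : EuclideanSpace ℝ (Fin N)) (r : ℝ)
    (w : EuclideanSpace ℝ (Fin N) → ℝ)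
    (hw : ∀ x, w x = -((p - 1) / (p * (N : ℝ) ^ ((1 : ℝ) / (p - 1)))) *
        (‖x - z‖ ^ (p / (p - 1)) - r))
    (x : EuclideanSpace ℝ (Fin N)) (hx : x ≠ z) :
    let e : Fin N → ℝ := fun i => (x - z) i / ‖x - z‖
    let A : Matrix (Fin N) (Fin N) ℝ :=
      ‖gradient w x‖ ^ (p - 2) •
        (((1 : Matrix (Fin N) (Fin N) ℝ) + (p - 2) • Matrix.vecMulVec e e) * hess w x)
    hess w x = (-((N : ℝ) ^ (-((1 : ℝ) / (p - 1))) * ‖x - z‖ ^ ((2 - p) / (p - 1)))) •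
        (((2 - p) / (p - 1)) • Matrix.vecMulVec e e + (1 : Matrix (Fin N) (Fin N) ℝ)) ∧
      A = (-(1 / (N : ℝ))) • (1 : Matrix (Fin N) (Fin N) ℝ) ∧
      frobSq A = (A.trace) ^ 2 / (N : ℝ) :=
  radial_solution_newton_equality_general N p hp1 z r w hw x hx
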